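/- arXiv:2007.05164 — 2 statements merged into one kernel-verified Lean document; each statement's English description precedes it below -/
import Mathlib

section
/- Assume additionally that w(A) ≥ 1 for every nonempty A ⊆ Fin m, and let A* ⊆ Fin m maximize v(A) − w(A) with v(A*) ≥ w(A*) + 1. For ℓ ∈ {1,…,k−1}, let X_ℓ be the subset of the ground set equal to the copy of A* inside M_ℓ (and empty in every other copy). Then: (1) for every ℓ ∈ {1,…,k−1}, X_ℓ maximizes v'_ℓ(S) − v'_{ℓ+1}(S) over all subsets S of the ground set; (2) v'_ℓ(X_i) ≤ 2k·max(v([m]), w([m])) for all ℓ ∈ {1,…,k} and i ∈ {1,…,k−1}; (3) for all 2 ≤ ℓ ≤ k−1, v'_ℓ(X_ℓ) ≥ v'_ℓ(X_{ℓ−1}) + 1, and v'_ℓ(X_{ℓ−1}) ≥ v'_ℓ(X_i) + 1 for all i ≤ ℓ−2. -/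
/-!
A set `X_j` lying in the single copy `M_j` has at most `m` items and every `v_ℓ` is monotone, so
truncation does not change it: `v'_ℓ(X_j)` is `(k+j)·v(A*)` for `ℓ ≤ j` and `(k+j)·w(A*)` otherwise,
and (2), (3) are arithmetic on these values. For (1), the levels `ℓ` and `ℓ+1` differ only on
`M_ℓ`, by `(k+ℓ)·(v − w)`; evaluating both on a witness of the truncation at level `ℓ` bounds
`v'_ℓ(S) − v'_{ℓ+1}(S)` by `(k+ℓ)·(v(A*) − w(A*)) = v'_ℓ(X_ℓ) − v'_{ℓ+1}(X_ℓ)`.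
-/

open Finset

/-- The `i`-th coordinate of a subset of the ground set consisting of `k−1`
disjoint copies of `Fin m`: the part of `S` inside copy `M_i`, viewed as a
subset of `Fin m`. (Copies are indexed `0,…,k−2`, copy `i` being `M_{i+1}`.) -/
def copyPart (m k : ℕ) (S : Finset (Fin (k - 1) × Fin m)) (i : Fin (k - 1)) :
    Finset (Fin m) :=
  (S.filter (fun p => p.1 = i)).image Prod.snd

/-- The scaled disjoint union `v_ℓ(S) = Σ_{i≥ℓ} (k+i)·v(S_i) + Σ_{i<ℓ} (k+i)·w(S_i)`
(indices `i ∈ {1,…,k−1}`, here represented by `Fin (k-1)` shifted by one). -/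
def scaledDU (m k : ℕ) (v w : Finset (Fin m) → ℕ) (ℓ : ℕ)
    (S : Finset (Fin (k - 1) × Fin m)) : ℕ :=
  ∑ i : Fin (k - 1), (k + (i : ℕ) + 1) *
    (if ℓ ≤ (i : ℕ) + 1 then v (copyPart m k S i) else w (copyPart m k S i))

/-- Item truncation at `y` of a set function: `u'(S) = max_{T ⊆ S, |T| ≤ y} u(T)`. -/
def itemTrunc {α : Type*} (y : ℕ) (u : Finset α → ℕ) (S : Finset α) : ℕ :=
  (S.powerset.filter (fun T => T.card ≤ y)).sup u

/-- `v'_ℓ`, the `ℓ`-th function of the instance `IT(v,w)`: the item truncation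
at `m` of the scaled disjoint union `v_ℓ`. -/
def ITfun (m k : ℕ) (v w : Finset (Fin m) → ℕ) (ℓ : ℕ)
    (S : Finset (Fin (k - 1) × Fin m)) : ℕ :=
  itemTrunc m (scaledDU m k v w ℓ) S

/-- The copy of `A ⊆ Fin m` inside copy `M_{i+1}` of the ground set
(empty in every other copy). -/
def copyEmbed (m k : ℕ) (i : Fin (k - 1)) (A : Finset (Fin m)) :
    Finset (Fin (k - 1) × Fin m) :=
  A.image (fun a => (i, a))

section ItemTruncation

variable {α : Type*} {y : ℕ} {u : Finset α → ℕ} {S T : Finset α}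

lemma le_itemTrunc (hTS : T ⊆ S) (hTc : T.card ≤ y) : u T ≤ itemTrunc y u S :=
  le_sup (mem_filter.mpr ⟨mem_powerset.mpr hTS, hTc⟩)

lemma exists_subset_itemTrunc_eq (y : ℕ) (u : Finset α → ℕ) (S : Finset α) :
    ∃ T ⊆ S, T.card ≤ y ∧ itemTrunc y u S = u T := by
  obtain ⟨T, hT, hEq⟩ :=
    exists_mem_eq_sup (S.powerset.filter fun T => T.card ≤ y) ⟨∅, by simp⟩ u
  rw [mem_filter, mem_powerset] at hT
  exact ⟨T, hT.1, hT.2, hEq⟩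

lemma itemTrunc_eq_self (hu : ∀ T ⊆ S, u T ≤ u S) (hS : S.card ≤ y) :
    itemTrunc y u S = u S :=
  le_antisymm (Finset.sup_le fun T hT => hu T (mem_powerset.mp (mem_filter.mp hT).1))
    (le_itemTrunc subset_rfl hS)

end ItemTruncation

section ScaledDisjointUnion

variable {m k : ℕ} {v w : Finset (Fin m) → ℕ}

lemma copyPart_mono (i : Fin (k - 1)) : Monotone fun S => copyPart m k S i :=
  fun _ _ h => image_subset_image (filter_subset_filter _ h)

lemma copyPart_copyEmbed (j i : Fin (k - 1)) (A : Finset (Fin m)) :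
    copyPart m k (copyEmbed m k j A) i = if i = j then A else ∅ := by
  ext a
  by_cases h : i = j <;> simp [copyPart, copyEmbed, h, eq_comm (a := j)]

lemma card_copyEmbed_le (j : Fin (k - 1)) (A : Finset (Fin m)) :
    (copyEmbed m k j A).card ≤ m :=
  card_image_le.trans (by simpa using card_le_univ A)

lemma scaledDU_mono (hv : Monotone v) (hw : Monotone w) (ℓ : ℕ) :
    Monotone (scaledDU m k v w ℓ) := fun _ _ h =>
  sum_le_sum fun i _ => Nat.mul_le_mul_left _ <| by
    split
    · exact hv (copyPart_mono i h)
    · exact hw (copyPart_mono i h)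

lemma scaledDU_copyEmbed (hv0 : v ∅ = 0) (hw0 : w ∅ = 0) (ℓ : ℕ) (j : Fin (k - 1))
    (A : Finset (Fin m)) :
    scaledDU m k v w ℓ (copyEmbed m k j A)
      = (k + j + 1) * if ℓ ≤ j + 1 then v A else w A := by
  rw [scaledDU, sum_eq_single j]
  · simp [copyPart_copyEmbed]
  · intro i _ hij
    rw [copyPart_copyEmbed, if_neg hij]
    split <;> simp [hv0, hw0]
  · simp

lemma scaledDU_sub_scaledDU_succ (i : Fin (k - 1)) (T : Finset (Fin (k - 1) × Fin m)) :
    (scaledDU m k v w (i + 1) T : ℤ) - scaledDU m k v w (i + 2) T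
      = (k + i + 1) * ((v (copyPart m k T i) : ℤ) - w (copyPart m k T i)) := by
  simp only [scaledDU, Nat.cast_sum, Nat.cast_mul, ← sum_sub_distrib, ← mul_sub]
  rw [sum_eq_single i]
  · simp
  · intro j _ hji
    have hji : (j : ℕ) ≠ i := Fin.val_ne_of_ne hji
    simp only [show (i : ℕ) + 2 ≤ j + 1 ↔ (i : ℕ) + 1 ≤ j + 1 by omega, sub_self, mul_zero]
  · simp

end ScaledDisjointUnion

section ItemTruncatedInstance

variable {m k : ℕ} {v w : Finset (Fin m) → ℕ}

lemma ITfun_copyEmbed (hv0 : v ∅ = 0) (hw0 : w ∅ = 0) (hv : Monotone v) (hw : Monotone w)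
    (ℓ : ℕ) (j : Fin (k - 1)) (A : Finset (Fin m)) :
    ITfun m k v w ℓ (copyEmbed m k j A)
      = (k + j + 1) * if ℓ ≤ j + 1 then v A else w A := by
  rw [ITfun, itemTrunc_eq_self (fun T hT => scaledDU_mono hv hw ℓ hT) (card_copyEmbed_le j A),
    scaledDU_copyEmbed hv0 hw0]

lemma ITfun_sub_ITfun_succ_le {c : ℤ} (hc : ∀ B, (v B : ℤ) - w B ≤ c) (i : Fin (k - 1))
    (S : Finset (Fin (k - 1) × Fin m)) :
    (ITfun m k v w (i + 1) S : ℤ) - ITfun m k v w (i + 2) S ≤ (k + i + 1) * c := by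
  obtain ⟨T, hTS, hTc, hT⟩ := exists_subset_itemTrunc_eq m (scaledDU m k v w (i + 1)) S
  have hlevel : scaledDU m k v w (i + 2) T ≤ ITfun m k v w (i + 2) S := le_itemTrunc hTS hTc
  calc (ITfun m k v w (i + 1) S : ℤ) - ITfun m k v w (i + 2) S
      ≤ (scaledDU m k v w (i + 1) T : ℤ) - scaledDU m k v w (i + 2) T := by
        rw [ITfun, hT]; omega
    _ = (k + i + 1) * ((v (copyPart m k T i) : ℤ) - w (copyPart m k T i)) :=
        scaledDU_sub_scaledDU_succ i T
    _ ≤ (k + i + 1) * c := mul_le_mul_of_nonneg_left (hc _) (by positivity)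

end ItemTruncatedInstance

/-- The combinatorial premises for Compatibility of `IT(v,w)`: with
`X_ℓ` the copy of a maximizer `A*` of `v − w` placed inside `M_ℓ`,
(1) `X_ℓ` maximizes `v'_ℓ − v'_{ℓ+1}`; (2) `v'_ℓ(X_i) ≤ 2k·max(v([m]),w([m]))`;
(3) `v'_ℓ(X_ℓ) ≥ v'_ℓ(X_{ℓ−1}) + 1 ≥ v'_ℓ(X_i) + 2` for `i ≤ ℓ−2`. -/
theorem IT_compatibility_premises (m k : ℕ)
    (v w : Finset (Fin m) → ℕ)
    (hv0 : v ∅ = 0) (hw0 : w ∅ = 0)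
    (hvmono : ∀ A B : Finset (Fin m), A ⊆ B → v A ≤ v B)
    (hwmono : ∀ A B : Finset (Fin m), A ⊆ B → w A ≤ w B)
    (hwpos : ∀ A : Finset (Fin m), A.Nonempty → 1 ≤ w A)
    (Astar : Finset (Fin m))
    (hAmax : ∀ B : Finset (Fin m), (v B : ℤ) - w B ≤ (v Astar : ℤ) - w Astar)
    (hAgap : w Astar + 1 ≤ v Astar) :
    -- (1) for every ℓ ∈ {1,…,k−1} (here ℓ = i+1 for i : Fin (k−1)),
    --     X_ℓ maximizes v'_ℓ(S) − v'_{ℓ+1}(S)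
    (∀ i : Fin (k - 1), ∀ S : Finset (Fin (k - 1) × Fin m),
      (ITfun m k v w ((i : ℕ) + 1) S : ℤ) - ITfun m k v w ((i : ℕ) + 2) S
        ≤ (ITfun m k v w ((i : ℕ) + 1) (copyEmbed m k i Astar) : ℤ)
          - ITfun m k v w ((i : ℕ) + 2) (copyEmbed m k i Astar)) ∧
    -- (2) v'_ℓ(X_i) ≤ 2k·max(v([m]), w([m])) for all ℓ ∈ {1,…,k}, i ∈ {1,…,k−1}
    (∀ ℓ : ℕ, 1 ≤ ℓ → ℓ ≤ k → ∀ i : Fin (k - 1),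
      ITfun m k v w ℓ (copyEmbed m k i Astar)
        ≤ 2 * k * max (v Finset.univ) (w Finset.univ)) ∧
    -- (3) for 2 ≤ ℓ ≤ k−1: v'_ℓ(X_ℓ) ≥ v'_ℓ(X_{ℓ−1}) + 1 and
    --     v'_ℓ(X_{ℓ−1}) ≥ v'_ℓ(X_i) + 1 for 1 ≤ i ≤ ℓ−2
    (∀ ℓ : ℕ, ∀ _h2 : 2 ≤ ℓ, ∀ _hℓ : ℓ ≤ k - 1,
      (ITfun m k v w ℓ (copyEmbed m k ⟨ℓ - 2, by omega⟩ Astar) + 1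
          ≤ ITfun m k v w ℓ (copyEmbed m k ⟨ℓ - 1, by omega⟩ Astar)) ∧
      (∀ i : ℕ, ∀ _hi1 : 1 ≤ i, ∀ _hi2 : i ≤ ℓ - 2,
        ITfun m k v w ℓ (copyEmbed m k ⟨i - 1, by omega⟩ Astar) + 1
          ≤ ITfun m k v w ℓ (copyEmbed m k ⟨ℓ - 2, by omega⟩ Astar))) := by
  have hX := ITfun_copyEmbed (k := k) hv0 hw0 (fun _ _ => hvmono _ _) (fun _ _ => hwmono _ _)
  have hwA : 1 ≤ w Astar := hwpos Astar <| nonempty_iff_ne_empty.mpr fun h => by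
    simp [h, hv0, hw0] at hAgap
  refine ⟨fun i S => ?_, fun ℓ _ _ i => ?_, fun ℓ _ _ => ⟨?_, fun i _ _ => ?_⟩⟩
  · convert ITfun_sub_ITfun_succ_le hAmax i S using 1
    rw [hX, hX, if_pos le_rfl, if_neg (by omega)]
    push_cast; ring
  · have hi : k + i + 1 ≤ 2 * k := by omega
    rw [hX]
    refine Nat.mul_le_mul hi ?_
    split
    · exact (hvmono _ _ (subset_univ _)).trans (le_max_left _ _)
    · exact (hwmono _ _ (subset_univ _)).trans (le_max_right _ _)
  · obtain ⟨e, rfl⟩ : ∃ e, ℓ = e + 2 := ⟨ℓ - 2, by omega⟩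
    simp only [hX, Nat.add_sub_cancel, show e + 2 - 1 = e + 1 by omega,
      if_neg (show ¬ e + 2 ≤ e + 1 by omega), if_pos (show e + 2 ≤ e + 1 + 1 by omega)]
    nlinarith [Nat.mul_le_mul_left (k + (e + 1) + 1) hAgap]
  · simp only [hX, if_neg (show ¬ ℓ ≤ i - 1 + 1 by omega), if_neg (show ¬ ℓ ≤ ℓ - 2 + 1 by omega)]
    have hcoef : k + (i - 1) + 1 + 1 ≤ k + (ℓ - 2) + 1 := by omega
    nlinarith [Nat.mul_le_mul_right (w Astar) hcoef]
end

section
/- Assume there exists A ⊆ Fin m with v(A) ≥ w(A) + 1. Then the instance VT(v,w) is 2·v([m])-balanced: for every ℓ ∈ {1,…,k−1}, v''_k(G) ≤ 2·v([m]) · max_T (v''_ℓ(T) − v''_{ℓ+1}(T)), where G is the entire ground set and the max is over all subsets T of the ground set. (In particular, v''_k(G) ≤ 2k·v([m]) and max_T (v''_ℓ(T) − v''_{ℓ+1}(T)) ≥ k+ℓ.) -/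
open Finset

/-- `v''_ℓ`, the `ℓ`-th function of the instance `VT(v,w)`: the value truncation
at `x = 2k·v([m])` of the scaled disjoint union `v_ℓ`. -/
def VTfun (m k : ℕ) (v w : Finset (Fin m) → ℕ) (ℓ : ℕ)
    (S : Finset (Fin (k - 1) × Fin m)) : ℕ :=
  min (scaledDU m k v w ℓ S) (2 * k * v (Finset.univ : Finset (Fin m)))

/-!
Put a set `A` with `v(A) > w(A)` into the copy `M_ℓ` and nothing elsewhere. On this set `v_ℓ`
charges `(k+ℓ)·v(A)` and `v_{ℓ+1}` charges `(k+ℓ)·w(A)`; both stay below the truncation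
threshold `2k·v([m])` by monotonicity, so `v''_ℓ - v''_{ℓ+1}` is at least `k+ℓ` there. Since
`v''_k` is truncated at `2k·v([m]) ≤ 2·v([m])·(k+ℓ)`, the balance inequality follows.
-/

lemma copyPart_singleton_product {m k : ℕ} (i₀ : Fin (k - 1)) (A : Finset (Fin m))
    (i : Fin (k - 1)) : copyPart m k ({i₀} ×ˢ A) i = if i = i₀ then A else ∅ := by
  ext a
  by_cases h : i = i₀
  · subst h; simp [copyPart]
  · simp [copyPart, h, Ne.symm h]

lemma scaledDU_singleton_product {m k : ℕ} {v w : Finset (Fin m) → ℕ} (hv0 : v ∅ = 0)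
    (hw0 : w ∅ = 0) (ℓ : ℕ) (i₀ : Fin (k - 1)) (A : Finset (Fin m)) :
    scaledDU m k v w ℓ ({i₀} ×ˢ A) =
      (k + (i₀ : ℕ) + 1) * (if ℓ ≤ (i₀ : ℕ) + 1 then v A else w A) := by
  rw [scaledDU, sum_eq_single i₀]
  · rw [copyPart_singleton_product, if_pos rfl]
  · intro i _ hi
    rw [copyPart_singleton_product, if_neg hi, hv0, hw0, ite_self, mul_zero]
  · simp

lemma exists_le_VTfun_sub_VTfun_succ {m k ℓ : ℕ} {v w : Finset (Fin m) → ℕ}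
    (hv0 : v ∅ = 0) (hw0 : w ∅ = 0) (hℓ : 1 ≤ ℓ) (hℓk : ℓ ≤ k - 1) {A : Finset (Fin m)}
    (hA : w A + 1 ≤ v A) (hvA : v A ≤ v univ) :
    ∃ T, (k + ℓ : ℤ) ≤ (VTfun m k v w ℓ T : ℤ) - VTfun m k v w (ℓ + 1) T := by
  let i₀ : Fin (k - 1) := ⟨ℓ - 1, by omega⟩
  have hscale : k + (i₀ : ℕ) + 1 = k + ℓ := by simp only [i₀]; omega
  have hcap : k + ℓ ≤ 2 * k := by omega
  have hVℓ : VTfun m k v w ℓ ({i₀} ×ˢ A) = (k + ℓ) * v A := by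
    rw [VTfun, scaledDU_singleton_product hv0 hw0, if_pos (by simp only [i₀]; omega), hscale]
    exact min_eq_left (Nat.mul_le_mul hcap hvA)
  have hVℓ' : VTfun m k v w (ℓ + 1) ({i₀} ×ˢ A) = (k + ℓ) * w A := by
    rw [VTfun, scaledDU_singleton_product hv0 hw0, if_neg (by simp only [i₀]; omega), hscale]
    exact min_eq_left (Nat.mul_le_mul hcap (by omega))
  refine ⟨{i₀} ×ˢ A, ?_⟩
  rw [hVℓ, hVℓ']
  have hA' : (w A : ℤ) + 1 ≤ v A := by exact_mod_cast hA
  push_cast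
  nlinarith

theorem VT_balanced_general (m k : ℕ)
    (v w : Finset (Fin m) → ℕ)
    (hv0 : v ∅ = 0) (hw0 : w ∅ = 0)
    (hvmono : ∀ A B : Finset (Fin m), A ⊆ B → v A ≤ v B)
    (hgap : ∃ A : Finset (Fin m), w A + 1 ≤ v A) :
    (∀ ℓ : ℕ, 1 ≤ ℓ → ℓ ≤ k - 1 →
      (VTfun m k v w k (Finset.univ : Finset (Fin (k - 1) × Fin m)) : ℤ)
        ≤ (2 * v (Finset.univ : Finset (Fin m)) : ℤ) *
          ((Finset.univ : Finset (Fin (k - 1) × Fin m)).powerset.sup'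
            ⟨∅, Finset.empty_mem_powerset _⟩
            (fun T => (VTfun m k v w ℓ T : ℤ) - VTfun m k v w (ℓ + 1) T))) ∧
    (VTfun m k v w k (Finset.univ : Finset (Fin (k - 1) × Fin m))
        ≤ 2 * k * v (Finset.univ : Finset (Fin m))) ∧
    (∀ ℓ : ℕ, 1 ≤ ℓ → ℓ ≤ k - 1 →
      (k + ℓ : ℤ) ≤
        (Finset.univ : Finset (Fin (k - 1) × Fin m)).powerset.sup'
          ⟨∅, Finset.empty_mem_powerset _⟩
          (fun T => (VTfun m k v w ℓ T : ℤ) - VTfun m k v w (ℓ + 1) T)) := by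
  obtain ⟨A, hA⟩ := hgap
  have hvA : v A ≤ v univ := hvmono A univ (subset_univ A)
  have hmax : ∀ ℓ : ℕ, 1 ≤ ℓ → ℓ ≤ k - 1 →
      (k + ℓ : ℤ) ≤ (univ : Finset (Fin (k - 1) × Fin m)).powerset.sup'
        ⟨∅, empty_mem_powerset _⟩
        (fun T => (VTfun m k v w ℓ T : ℤ) - VTfun m k v w (ℓ + 1) T) := by
    intro ℓ hℓ hℓk
    obtain ⟨T, hT⟩ := exists_le_VTfun_sub_VTfun_succ hv0 hw0 hℓ hℓk hA hvA
    exact le_sup'_of_le _ (mem_powerset.2 (subset_univ T)) hT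
  refine ⟨fun ℓ hℓ hℓk => ?_, min_le_right _ _, hmax⟩
  calc (VTfun m k v w k univ : ℤ) ≤ 2 * k * v univ := by exact_mod_cast min_le_right _ _
    _ ≤ 2 * v univ * (k + ℓ) := by nlinarith [(v univ).cast_nonneg (α := ℤ)]
    _ ≤ _ := mul_le_mul_of_nonneg_left (hmax ℓ hℓ hℓk) (by positivity)

/-- If some `A` has `v(A) ≥ w(A) + 1`, then `VT(v,w)` is `2·v([m])`-balanced:
for every `ℓ ∈ {1,…,k−1}`,
`v''_k(G) ≤ 2·v([m]) · max_T (v''_ℓ(T) − v''_{ℓ+1}(T))`, where `G` is the whole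
ground set. In particular `v''_k(G) ≤ 2k·v([m])` and the max is `≥ k+ℓ`. -/
theorem VT_balanced (m k : ℕ) (hk : 2 ≤ k)
    (v w : Finset (Fin m) → ℕ)
    (hv0 : v ∅ = 0) (hw0 : w ∅ = 0)
    (hvmono : ∀ A B : Finset (Fin m), A ⊆ B → v A ≤ v B)
    (hwmono : ∀ A B : Finset (Fin m), A ⊆ B → w A ≤ w B)
    (hgap : ∃ A : Finset (Fin m), w A + 1 ≤ v A) :
    (∀ ℓ : ℕ, 1 ≤ ℓ → ℓ ≤ k - 1 →
      (VTfun m k v w k (Finset.univ : Finset (Fin (k - 1) × Fin m)) : ℤ)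
        ≤ (2 * v (Finset.univ : Finset (Fin m)) : ℤ) *
          ((Finset.univ : Finset (Fin (k - 1) × Fin m)).powerset.sup'
            ⟨∅, Finset.empty_mem_powerset _⟩
            (fun T => (VTfun m k v w ℓ T : ℤ) - VTfun m k v w (ℓ + 1) T))) ∧
    (VTfun m k v w k (Finset.univ : Finset (Fin (k - 1) × Fin m))
        ≤ 2 * k * v (Finset.univ : Finset (Fin m))) ∧
    (∀ ℓ : ℕ, 1 ≤ ℓ → ℓ ≤ k - 1 →
      (k + ℓ : ℤ) ≤
        (Finset.univ : Finset (Fin (k - 1) × Fin m)).powerset.sup'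
          ⟨∅, Finset.empty_mem_powerset _⟩
          (fun T => (VTfun m k v w ℓ T : ℤ) - VTfun m k v w (ℓ + 1) T)) :=
  VT_balanced_general m k v w hv0 hw0 hvmono hgap
end
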